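/- (Contraction of the proximal point method toward equilibrium) Suppose f_{x̄} is α-strongly convex for some α > 0. Then for every x ∈ E, every η > 0, and every minimizer x⁺ over E of y ↦ f_x(y) + r(y) + (1/(2η))‖y − x‖², one has ‖x⁺ − x̄‖ ≤ ((1 + γηβ)/(1 + ηα))·‖x − x̄‖. In particular, if γβ/α < 1 the proximal point update contracts toward the equilibrium point x̄. -/

import Mathlib

/-!
Write `φ = f_x̄ + r` and `Φ = φ + ‖· - x‖² / (2η)`. Testing the Kantorovich–Rubinstein bound
against `z ↦ ⟪v, ∇ℓ(y, z)⟫` shows `‖∇f_x(y) - ∇f_x̄(y)‖ ≤ γβ‖x - x̄‖`, so the drift `f_x - f_x̄`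
is `γβ‖x - x̄‖`-Lipschitz. If `y` minimizes an `m`-strongly convex function up to an
`L`-Lipschitz perturbation, comparing with the points of the segment `[y, z]` near `y` gives
`m/2 ‖z - y‖² ≤ Φ z - Φ y + L ‖z - y‖`. Applying this to `φ` at `x̄` (with `L = 0`) and to `Φ` at
`x⁺` and adding, the function values cancel up to `‖x̄ - x‖² - ‖x⁺ - x‖² ≤ 2st - t²`
(reverse triangle inequality, `s = ‖x - x̄‖`, `t = ‖x⁺ - x̄‖`), which leaves
`(1 + ηα) t² ≤ (1 + ηγβ) s t`.
-/

open MeasureTheory Set Filter Topology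
open scoped RealInnerProductSpace NNReal

section Kantorovich

variable {Z E : Type*} [MetricSpace Z] [MeasurableSpace Z] {μ ν : Measure Z} {δ : ℝ}

theorem abs_integral_sub_le_of_lipschitzWith
    (hμν : ∀ g : Z → ℝ, LipschitzWith 1 g → |∫ z, g z ∂μ - ∫ z, g z ∂ν| ≤ δ)
    {g : Z → ℝ} {K : ℝ≥0} (hg : LipschitzWith K g) :
    |∫ z, g z ∂μ - ∫ z, g z ∂ν| ≤ K * δ := by
  have hscaled : ∀ c : ℝ≥0, K < c → |∫ z, g z ∂μ - ∫ z, g z ∂ν| ≤ c * δ := by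
    intro c hc
    have hc0 : (0 : ℝ) < c := K.coe_nonneg.trans_lt hc
    have hlip : LipschitzWith 1 fun z => (c : ℝ)⁻¹ * g z := by
      refine ((lipschitzWith_smul (c : ℝ)⁻¹).comp hg).weaken ?_
      rw [nnnorm_inv, NNReal.nnnorm_eq]
      exact inv_mul_le_one_of_le₀ hc.le (by positivity)
    have := hμν _ hlip
    rwa [integral_const_mul, integral_const_mul, ← mul_sub, abs_mul, abs_inv,
      abs_of_pos hc0, inv_mul_le_iff₀ hc0] at this
  have hlim : Tendsto (fun c : ℝ≥0 => (c : ℝ) * δ) (𝓝[>] K) (𝓝 (K * δ)) :=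
    ((NNReal.continuous_coe.mul continuous_const).tendsto K).mono_left nhdsWithin_le_nhds
  exact ge_of_tendsto hlim (eventually_nhdsWithin_of_forall hscaled)

variable [NormedAddCommGroup E] [InnerProductSpace ℝ E] [CompleteSpace E]

theorem norm_integral_sub_le_of_lipschitzWith
    (hμν : ∀ g : Z → ℝ, LipschitzWith 1 g → |∫ z, g z ∂μ - ∫ z, g z ∂ν| ≤ δ)
    {G : Z → E} {K : ℝ≥0} (hG : LipschitzWith K G) (hGμ : Integrable G μ) (hGν : Integrable G ν) :
    ‖∫ z, G z ∂μ - ∫ z, G z ∂ν‖ ≤ K * δ := by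
  set v := ∫ z, G z ∂μ - ∫ z, G z ∂ν
  have hδ : 0 ≤ δ := (abs_nonneg _).trans (hμν _ ((LipschitzWith.const 0).weaken zero_le_one))
  have hsq : ‖v‖ ^ 2 ≤ ‖v‖ * (K * δ) := by
    have := abs_integral_sub_le_of_lipschitzWith hμν ((innerSL ℝ v).lipschitz.comp hG)
    simp only [Function.comp_def, innerSL_apply_apply, integral_inner hGμ, integral_inner hGν,
      ← inner_sub_right, NNReal.coe_mul, coe_nnnorm, innerSL_apply_norm] at this
    rw [mul_assoc] at this
    rw [← real_inner_self_eq_norm_sq]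
    exact (le_abs_self _).trans this
  rcases (norm_nonneg v).eq_or_lt with hv | hv
  · rw [← hv]; positivity
  · nlinarith

end Kantorovich

section Calculus

variable {E : Type*} [NormedAddCommGroup E] [InnerProductSpace ℝ E] [CompleteSpace E]
  {f g : E → ℝ} {f' : E → E} {x : E}

theorem HasGradientAt.sub {a b : E} (hf : HasGradientAt f a x) (hg : HasGradientAt g b x) :
    HasGradientAt (fun y => f y - g y) (a - b) x := by
  rw [hasGradientAt_iff_hasFDerivAt, map_sub]
  exact hf.hasFDerivAt.sub hg.hasFDerivAt

theorem abs_sub_le_of_hasGradientAt_of_norm_le {C : ℝ} (hf : ∀ y, HasGradientAt f (f' y) y)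
    (hC : ∀ y, ‖f' y‖ ≤ C) (a b : E) : |f a - f b| ≤ C * ‖a - b‖ := by
  simpa only [Real.norm_eq_abs] using Convex.norm_image_sub_le_of_norm_hasFDerivWithin_le
    (fun y _ => (hf y).hasFDerivAt.hasFDerivWithinAt)
    (fun y _ => ((InnerProductSpace.toDual ℝ E).norm_map (f' y)).trans_le (hC y))
    convex_univ (mem_univ b) (mem_univ a)

end Calculus

theorem le_of_forall_one_sub_mul_le {A B : ℝ} (h : ∀ l ∈ Ioc (0 : ℝ) 1, (1 - l) * A ≤ B) :
    A ≤ B := by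
  have hlim : Tendsto (fun l : ℝ => (1 - l) * A) (𝓝[>] 0) (𝓝 A) := by
    have hcont : Continuous fun l : ℝ => (1 - l) * A := by fun_prop
    simpa using (hcont.tendsto 0).mono_left nhdsWithin_le_nhds
  exact le_of_tendsto hlim (mem_of_superset (Ioc_mem_nhdsGT zero_lt_one) h)

theorem le_div_mul_of_mul_sq_le {a b s t : ℝ} (ha : 0 < a) (hb : 0 ≤ b) (hs : 0 ≤ s)
    (ht : 0 ≤ t) (h : a * t ^ 2 ≤ b * s * t) : t ≤ b / a * s := by
  rw [div_mul_eq_mul_div, le_div_iff₀ ha]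
  rcases ht.eq_or_lt with rfl | ht
  · rw [zero_mul]; positivity
  · nlinarith

section StrongConvexity

variable {E : Type*} [NormedAddCommGroup E] [InnerProductSpace ℝ E] {s : Set E} {m : ℝ}
  {Φ : E → ℝ}

theorem StrongConvexOn.add_mul_sq_norm_sub (hΦ : StrongConvexOn s m Φ) (c : ℝ) (x : E) :
    StrongConvexOn s (m + 2 * c) fun y => Φ y + c * ‖y - x‖ ^ 2 := by
  rw [strongConvexOn_iff_convex] at hΦ ⊢
  refine ((hΦ.add ((innerₛₗ ℝ ((-2 * c) • x)).convexOn hΦ.1)).add_const (c * ‖x‖ ^ 2)).congr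
    fun y _ => ?_
  simp only [Pi.add_apply, innerₛₗ_apply_apply, real_inner_smul_left, real_inner_comm x,
    norm_sub_sq_real]
  ring

theorem StrongConvexOn.mul_sq_norm_sub_le {L : ℝ} {y z : E} (hΦ : StrongConvexOn s m Φ)
    (hy : y ∈ s) (hz : z ∈ s) (hmin : ∀ w ∈ s, Φ y ≤ Φ w + L * ‖w - y‖) :
    m / 2 * ‖z - y‖ ^ 2 ≤ Φ z - Φ y + L * ‖z - y‖ := by
  refine le_of_forall_one_sub_mul_le fun l ⟨hl0, hl1⟩ => ?_
  have hconv := hΦ.2 hy hz (sub_nonneg.2 hl1) hl0.le (sub_add_cancel 1 l)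
  have hstep : ‖((1 - l) • y + l • z) - y‖ = l * ‖z - y‖ := by
    rw [show (1 - l) • y + l • z - y = l • (z - y) by module, norm_smul, Real.norm_of_nonneg hl0.le]
  have hnear := hmin _ (hΦ.1 hy hz (sub_nonneg.2 hl1) hl0.le (sub_add_cancel 1 l))
  rw [hstep] at hnear
  rw [norm_sub_rev y z] at hconv
  simp only [smul_eq_mul] at hconv
  refine le_of_mul_le_mul_left ?_ hl0
  linarith

end StrongConvexity

theorem repeated_minimization_contraction_general
    {E : Type*} [NormedAddCommGroup E] [InnerProductSpace ℝ E] [FiniteDimensional ℝ E]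
    {Z : Type*} [MetricSpace Z] [MeasurableSpace Z]
    (G : E → Z → E) (β γ : ℝ) (hβ : 0 ≤ β) (hγ : 0 ≤ γ)
    (hlip : ∀ (x : E) (z z' : Z), ‖G x z - G x z'‖ ≤ β * dist z z')
    (D : E → Measure Z)
    (hintG : ∀ x y : E, Integrable (fun z => G y z) (D x))
    (f : E → E → ℝ) (Gf : E → E → E)
    (hGfdef : ∀ x y : E, Gf x y = ∫ z, G y z ∂(D x))
    (hfgrad : ∀ x y : E, HasGradientAt (f x) (Gf x y) y)
    (hDlip : ∀ x y : E, ∀ g : Z → ℝ, LipschitzWith 1 g →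
      |(∫ z, g z ∂(D x)) - ∫ z, g z ∂(D y)| ≤ γ * ‖x - y‖)
    (r : E → ℝ) (hr : ConvexOn ℝ univ r)
    (xbar : E) (hxbar : ∀ y : E, f xbar xbar + r xbar ≤ f xbar y + r y)
    (α : ℝ) (hα : 0 < α)
    (hsc : ConvexOn ℝ univ (fun y => f xbar y - α / 2 * ‖y‖ ^ 2))
    (x : E) (η : ℝ) (hη : 0 < η)
    (xp : E) (hxp : ∀ y : E, f x xp + r xp + 1 / (2 * η) * ‖xp - x‖ ^ 2
      ≤ f x y + r y + 1 / (2 * η) * ‖y - x‖ ^ 2) :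
    ‖xp - xbar‖ ≤ ((1 + γ * η * β) / (1 + η * α)) * ‖x - xbar‖ := by
  set s := ‖x - xbar‖
  set t := ‖xp - xbar‖
  set q := 1 / (2 * η) with hq_def
  have hq : 2 * q * η = 1 := by rw [hq_def]; field_simp
  have hq0 : 0 < q := by positivity
  clear_value q
  have hgrad_drift : ∀ y, ‖Gf x y - Gf xbar y‖ ≤ γ * β * s := fun y => by
    have := norm_integral_sub_le_of_lipschitzWith (hDlip x xbar)
      (LipschitzWith.of_dist_le' (by simpa only [dist_eq_norm] using hlip y))
      (hintG x y) (hintG xbar y)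
    rw [hGfdef, hGfdef]
    rwa [Real.coe_toNNReal _ hβ, mul_left_comm, ← mul_assoc] at this
  have hdrift := abs_sub_le_of_hasGradientAt_of_norm_le
    (fun y => (hfgrad x y).sub (hfgrad xbar y)) hgrad_drift
  have hφ : StrongConvexOn univ α fun y => f xbar y + r y := by
    refine strongConvexOn_iff_convex.2 ((hsc.add hr).congr fun y _ => ?_)
    simp only [Pi.add_apply]; ring
  have hgrowth := hφ.mul_sq_norm_sub_le (L := 0) (mem_univ xbar) (mem_univ xp)
    fun w _ => by simpa using hxbar w
  have hprox := (hφ.add_mul_sq_norm_sub q x).mul_sq_norm_sub_le (L := γ * β * s)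
    (mem_univ xp) (mem_univ xbar) fun w _ => by
      linarith [hxp w, le_abs_self ((f x w - f xbar w) - (f x xp - f xbar xp)), hdrift w xp]
  have htri : (t - s) ^ 2 ≤ ‖xp - x‖ ^ 2 := by
    rw [← sq_abs]
    gcongr
    simpa using abs_norm_sub_norm_le (xp - xbar) (x - xbar)
  rw [norm_sub_rev xbar xp, norm_sub_rev xbar x] at hprox
  have hkey : (α + 2 * q) * t ^ 2 ≤ (2 * q * s + γ * β * s) * t := by
    linarith [mul_le_mul_of_nonneg_left htri hq0.le]
  refine le_div_mul_of_mul_sq_le (by positivity) (by positivity) (norm_nonneg _) (norm_nonneg _) ?_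
  linear_combination η * hkey + (s * t - t ^ 2) * hq

/-- **Contraction of repeated minimization toward equilibrium.** If `f_{xbar}` is `α`-strongly
convex, then any minimizer `xp` of `f_x + r` satisfies `‖xp − xbar‖ ≤ (γβ/α)‖x − xbar‖`. -/
theorem repeated_minimization_contraction
    {E : Type*} [NormedAddCommGroup E] [InnerProductSpace ℝ E] [FiniteDimensional ℝ E]
    {Z : Type*} [MetricSpace Z] [MeasurableSpace Z] [BorelSpace Z]
    (ℓ : E → Z → ℝ) (G : E → Z → E) (β γ : ℝ) (hβ : 0 ≤ β) (hγ : 0 ≤ γ)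
    (hgrad : ∀ (x : E) (z : Z), HasGradientAt (fun x' => ℓ x' z) (G x z) x)
    (hlip : ∀ (x : E) (z z' : Z), ‖G x z - G x z'‖ ≤ β * dist z z')
    (D : E → Measure Z) (hD : ∀ x : E, IsProbabilityMeasure (D x))
    (hint : ∀ x y : E, Integrable (fun z => ℓ y z) (D x))
    (hintG : ∀ x y : E, Integrable (fun z => G y z) (D x))
    (f : E → E → ℝ) (Gf : E → E → E)
    (hfdef : ∀ x y : E, f x y = ∫ z, ℓ y z ∂(D x))
    (hGfdef : ∀ x y : E, Gf x y = ∫ z, G y z ∂(D x))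
    (hfgrad : ∀ x y : E, HasGradientAt (f x) (Gf x y) y)
    (hDlip : ∀ x y : E, ∀ g : Z → ℝ, LipschitzWith 1 g →
      |(∫ z, g z ∂(D x)) - ∫ z, g z ∂(D y)| ≤ γ * ‖x - y‖)
    (r : E → ℝ) (hr : ConvexOn ℝ univ r)
    (xbar : E) (hxbar : ∀ y : E, f xbar xbar + r xbar ≤ f xbar y + r y)
    (α : ℝ) (hα : 0 < α)
    (hsc : ConvexOn ℝ univ (fun y => f xbar y - α / 2 * ‖y‖ ^ 2))
    (x : E) (η : ℝ) (hη : 0 < η)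
    (xp : E) (hxp : ∀ y : E, f x xp + r xp + 1 / (2 * η) * ‖xp - x‖ ^ 2
      ≤ f x y + r y + 1 / (2 * η) * ‖y - x‖ ^ 2) :
    ‖xp - xbar‖ ≤ ((1 + γ * η * β) / (1 + η * α)) * ‖x - xbar‖ :=
  repeated_minimization_contraction_general G β γ hβ hγ hlip D hintG f Gf hGfdef hfgrad hDlip r hr
    xbar hxbar α hα hsc x η hη xp hxp
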